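/- arXiv:2510.20382 — 2 statements merged into one kernel-verified Lean document; each statement's English description precedes it below -/
import Mathlib

section
/- Every rooted tree with n' ≥ 2 vertices in which every vertex has at most 2 children contains at least n'/4 pairwise disjoint pairs {v, w} of vertices such that w is the parent of v and v is either a leaf or has exactly one child. -/
/-!
Call a non-root vertex with at most one child a candidate. Every non-root vertex `v` has
`2 [v is a candidate] + #children(v) ≥ 2`, and the root has a child; summing, and using that the
children counts add up to `n - 1`, gives `2 #candidates + n - 1 ≥ 2 (n - 1) + 1`, so at least
half of the vertices are candidates.

Each vertex lies on at most two candidate edges (from a candidate to its parent): a candidate has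
at most one child, any other vertex at most two. Take a candidate `v` with no candidate child and
its parent `w`: the edge `(v, w)` meets only the at most two candidate edges at `w`. Keeping it
and discarding those, induction gives pairwise disjoint candidate edges, at least half as many
as there are candidates, hence at least `n / 4`.
-/

open Finset

namespace RootedTree

variable {V : Type*}

def VertexDisjoint (p q : V × V) : Prop :=
  p.1 ≠ q.1 ∧ p.1 ≠ q.2 ∧ p.2 ≠ q.1 ∧ p.2 ≠ q.2

theorem VertexDisjoint.symm {p q : V × V} (h : VertexDisjoint p q) : VertexDisjoint q p :=
  ⟨h.1.symm, h.2.2.1.symm, h.2.1.symm, h.2.2.2.symm⟩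

variable (parent : V → Option V)

theorem exists_vertexDisjoint_parent_pairs [DecidableEq V]
    (hwf : WellFounded fun a b : V => parent a = some b) (C : Finset V)
    (hC : ∀ v ∈ C, ∃ w, parent v = some w)
    (hdeg : ∀ w, #{c ∈ C | parent c = some w ∨ c = w} ≤ 2) :
    ∃ P : Finset (V × V), (∀ p ∈ P, p.1 ∈ C ∧ parent p.1 = some p.2) ∧
      (P : Set (V × V)).Pairwise VertexDisjoint ∧ #C ≤ 2 * #P := by
  induction C using Finset.strongInduction with
  | H C ih =>
  obtain rfl | hne := C.eq_empty_or_nonempty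
  · exact ⟨∅, by simp, by simp, by simp⟩
  -- `v` has no child in `C`, so the edge `(v, w)` only meets the edges at `w`.
  obtain ⟨v, hvC, hvmin⟩ := hwf.has_min (C : Set V) hne
  obtain ⟨w, hvw⟩ := hC v hvC
  set D := {c ∈ C | parent c = some w ∨ c = w}
  have hvD : v ∈ D := mem_filter.2 ⟨hvC, .inl hvw⟩
  obtain ⟨P, hPC, hPdisj, hPcard⟩ := ih (C \ D) (sdiff_ssubset (filter_subset _ _) ⟨v, hvD⟩)
    (fun c hc => hC c (mem_sdiff.1 hc).1)
    (fun u => (card_le_card (filter_subset_filter _ sdiff_subset)).trans (hdeg u))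
  have hvP : (v, w) ∉ P := fun h => (mem_sdiff.1 (hPC _ h).1).2 hvD
  refine ⟨insert (v, w) P, ?_, ?_, ?_⟩
  · simp only [mem_insert, forall_eq_or_imp]
    exact ⟨⟨hvC, hvw⟩, fun p hp => ⟨(mem_sdiff.1 (hPC p hp).1).1, (hPC p hp).2⟩⟩
  · have hsep : ∀ p ∈ P, VertexDisjoint (v, w) p := by
      intro p hp
      obtain ⟨hpC, hpD⟩ := mem_sdiff.1 (hPC p hp).1
      have hpw : ¬(parent p.1 = some w ∨ p.1 = w) := fun h => hpD (mem_filter.2 ⟨hpC, h⟩)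
      refine ⟨fun h => hpD (h ▸ hvD), fun h => hvmin p.1 hpC ?_, fun h => hpw (.inr h.symm),
        fun h => hpw (.inl ((hPC p hp).2.trans (congrArg some h.symm)))⟩
      rw [(hPC p hp).2, ← h]
    rw [coe_insert]
    exact hPdisj.insert_of_notMem hvP fun p hp => ⟨hsep p hp, (hsep p hp).symm⟩
  · have hD : #D ≤ 2 := hdeg w
    rw [← card_sdiff_add_card_eq_card (show D ⊆ C from filter_subset _ _),
      card_insert_of_notMem hvP]
    omega

theorem wellFounded_swap_of_finite {α : Type*} [Finite α] {r : α → α → Prop}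
    (h : WellFounded r) : WellFounded (Function.swap r) := by
  have : Std.Irrefl (Function.swap (Relation.TransGen r)) := ⟨h.transGen.irrefl.irrefl⟩
  refine Subrelation.wf ?_
    (Finite.wellFounded_of_trans_of_irrefl (Function.swap (Relation.TransGen r)))
  exact fun hab => Relation.TransGen.single hab

section Tree

variable [Fintype V] [DecidableEq V]

def candidates : Finset V :=
  {v | (parent v).isSome ∧ #{u | parent u = some v} ≤ 1}

theorem card_eq_sum_card_children_add_one (hroot : ∃! r, parent r = none) :
    Fintype.card V = ∑ v, #{u | parent u = some v} + 1 := by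
  obtain ⟨r, hr, huniq⟩ := hroot
  have hnone : #{u | parent u = none} = 1 :=
    card_eq_one.2 ⟨r, by ext u; simpa using ⟨huniq u, fun h => h ▸ hr⟩⟩
  rw [← card_univ, card_eq_sum_card_fiberwise (f := parent) (t := univ) (by simp),
    Fintype.sum_option, hnone, add_comm]

omit [DecidableEq V] in
theorem eq_root_of_forall_parent_ne (hwf : WellFounded fun a b : V => parent a = some b)
    {r : V} (hroot : ∀ x, parent x = none → x = r) (hchild : ∀ x, parent x ≠ some r) (x : V) :
    x = r := by
  induction x using (wellFounded_swap_of_finite hwf).induction with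
  | _ x ih =>
  cases hx : parent x with
  | none => exact hroot x hx
  | some y => exact absurd (ih y hx ▸ hx) (hchild x)

theorem card_le_two_mul_card_candidates (hwf : WellFounded fun a b : V => parent a = some b)
    (hroot : ∃! r, parent r = none) (hn : 2 ≤ Fintype.card V) :
    Fintype.card V ≤ 2 * #(candidates parent) := by
  obtain ⟨r, hr, huniq⟩ := hroot
  have hr_child : 1 ≤ #{u | parent u = some r} := by
    rw [Nat.one_le_iff_ne_zero, Ne, card_eq_zero, filter_eq_empty_iff]
    intro h
    have hall := eq_root_of_forall_parent_ne parent hwf huniq fun x => h (mem_univ x)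
    have := Fintype.card_le_one_iff.2 fun a b => (hall a).trans (hall b).symm
    omega
  set g : V → ℕ := fun v =>
    2 * (if v ∈ candidates parent then 1 else 0) + #{u | parent u = some v}
  have hg : ∀ v ∈ univ.erase r, 2 ≤ g v := by
    intro v hv
    obtain ⟨w, hw⟩ := Option.ne_none_iff_exists'.1 fun h => (mem_erase.1 hv).1 (huniq v h)
    by_cases hv1 : #{u | parent u = some v} ≤ 1
    · simp [g, candidates, hw, hv1]
    · simp only [g]; omega
  have hsum : ∑ v, g v = 2 * #(candidates parent) + (Fintype.card V - 1) := by
    simp [g, sum_add_distrib, card_eq_sum_card_children_add_one parent ⟨r, hr, huniq⟩,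
      mul_comm]
  have hlow : 2 * (Fintype.card V - 1) + 1 ≤ ∑ v, g v := by
    rw [← add_sum_erase univ g (mem_univ r)]
    have := sum_le_sum hg
    simp only [sum_const, card_erase_of_mem (mem_univ r), card_univ, smul_eq_mul] at this
    have : 1 ≤ g r := le_add_left hr_child
    omega
  omega

theorem card_candidate_edges_le_two (hdeg : ∀ v, #{u | parent u = some v} ≤ 2) (w : V) :
    #{c ∈ candidates parent | parent c = some w ∨ c = w} ≤ 2 := by
  by_cases hw : w ∈ candidates parent
  · calc #{c ∈ candidates parent | parent c = some w ∨ c = w}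
        ≤ #(insert w ({u | parent u = some w} : Finset V)) := card_le_card fun c hc => by
          rcases (mem_filter.1 hc).2 with h | h <;> simp [h]
      _ ≤ #{u | parent u = some w} + 1 := card_insert_le _ _
      _ ≤ 2 := by have := (mem_filter.1 hw).2.2; omega
  · calc #{c ∈ candidates parent | parent c = some w ∨ c = w}
        ≤ #{u | parent u = some w} := card_le_card fun c hc => by
          obtain ⟨hcC, h | rfl⟩ := mem_filter.1 hc
          · simp [h]
          · exact absurd hcC hw
      _ ≤ 2 := hdeg w

end Tree

end RootedTree

open Finset RootedTree in
/-- Every rooted tree with `n' ≥ 2` vertices in which every vertex has at most two children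
contains at least `n'/4` pairwise disjoint pairs `(v, w)` where `w` is the parent of `v`
and `v` is a leaf or has exactly one child. -/
theorem stmt4 {V : Type} [Fintype V] (parent : V → Option V)
    (hwf : WellFounded (fun a b : V => parent a = some b))
    (hroot : ∃! r : V, parent r = none)
    (hdeg : ∀ v : V, {u : V | parent u = some v}.ncard ≤ 2)
    (hn : 2 ≤ Fintype.card V) :
    ∃ P : Finset (V × V),
      (∀ p ∈ P, parent p.1 = some p.2 ∧ {u : V | parent u = some p.1}.ncard ≤ 1) ∧
      (∀ p ∈ P, ∀ q ∈ P, p ≠ q →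
        p.1 ≠ q.1 ∧ p.1 ≠ q.2 ∧ p.2 ≠ q.1 ∧ p.2 ≠ q.2) ∧
      Fintype.card V ≤ 4 * P.card := by
  classical
  have hchildren (v : V) : {u : V | parent u = some v}.ncard = #{u | parent u = some v} := by
    rw [Set.ncard_eq_toFinset_card', Set.toFinset_ofPred]
  obtain ⟨P, hPC, hPdisj, hPcard⟩ := exists_vertexDisjoint_parent_pairs parent hwf
    (candidates parent) (fun v hv => Option.isSome_iff_exists.1 (mem_filter.1 hv).2.1)
    (card_candidate_edges_le_two parent fun v => hchildren v ▸ hdeg v)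
  refine ⟨P, fun p hp => ⟨(hPC p hp).2, hchildren p.1 ▸ (mem_filter.1 (hPC p hp).1).2.2⟩,
    hPdisj, ?_⟩
  have := card_le_two_mul_card_candidates parent hwf hroot hn
  omega
end

section
/- For every k ≥ 2 and every n ≥ 1, the number of permutations of length n avoiding the decreasing pattern (k, k−1, ..., 1) is at most (k−1)^{2n}. -/
/-!
Rank each position of `τ` by the length of a longest decreasing subsequence ending there. If `τ`
avoids the decreasing pattern of length `k`, there are at most `k - 1` ranks, and `τ` is
increasing on each rank class (Mirsky's partition into increasing subsequences). So `τ` maps the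
positions of a rank class increasingly onto the values at those positions, and is recovered from
the two words `i ↦ rank i` and `v ↦ rank (τ⁻¹ v)` over an alphabet of `k - 1` letters.
-/

/-- Permutation pattern containment. -/
def Contains {n k : ℕ} (τ : Equiv.Perm (Fin n)) (π : Equiv.Perm (Fin k)) : Prop :=
  ∃ f : Fin k → Fin n, StrictMono f ∧ ∀ j l : Fin k, π j < π l ↔ τ (f j) < τ (f l)

theorem StrictMonoOn.eqOn_of_image_eq {α β : Type*} [LinearOrder α] [WellFoundedLT α]
    [Preorder β] {f g : α → β} {s : Set α} (hf : StrictMonoOn f s) (hg : StrictMonoOn g s)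
    (h : f '' s = g '' s) : s.EqOn f g := by
  have hrange : Set.range (f ∘ Subtype.val : s → β) = Set.range (g ∘ Subtype.val : s → β) := by
    simpa only [Set.range_comp, Subtype.range_coe] using h
  exact fun x hx => congrFun ((hf.strictMono.range_inj hg.strictMono).1 hrange) ⟨x, hx⟩

namespace Equiv.Perm

variable {n : ℕ} (τ : Equiv.Perm (Fin n))

/-- `τ.decRank i + 1` is the length of a longest decreasing subsequence of `τ` ending at
position `i`. -/
def decRank (i : Fin n) : ℕ :=
  (Finset.univ.filter fun j => j < i ∧ τ i < τ j).attach.sup fun j => decRank j.1 + 1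
termination_by i
decreasing_by exact (Finset.mem_filter.mp j.2).2.1

theorem decRank_lt_decRank {i j : Fin n} (hji : j < i) (hτ : τ i < τ j) :
    τ.decRank j < τ.decRank i := by
  have hj : j ∈ Finset.univ.filter fun j => j < i ∧ τ i < τ j := by simp [hji, hτ]
  rw [decRank.eq_1 τ i]
  exact Finset.le_sup (f := fun j => τ.decRank j.1 + 1) (Finset.mem_attach _ ⟨j, hj⟩)

theorem strictMonoOn_setOf_decRank_eq (c : ℕ) : StrictMonoOn τ {i | τ.decRank i = c} := by
  intro i hi j hj hij
  by_contra! h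
  have := τ.decRank_lt_decRank hij (h.lt_of_ne (τ.injective.ne hij.ne'))
  simp_all

theorem exists_decreasing_list_length_eq (i : Fin n) :
    ∃ l : List (Fin n), l.length = τ.decRank i + 1 ∧
      l.Pairwise (fun a b => a < b ∧ τ b < τ a) ∧ ∀ a ∈ l, a ≤ i ∧ τ i ≤ τ a := by
  induction i using WellFoundedLT.induction with
  | ind i ih =>
    set s := Finset.univ.filter fun j => j < i ∧ τ i < τ j
    rcases s.eq_empty_or_nonempty with hs | hs
    · refine ⟨[i], ?_, List.pairwise_singleton _ _, by simp⟩
      rw [decRank.eq_1, List.length_singleton]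
      simp [s, hs]
    · obtain ⟨⟨j, hj⟩, -, hsup⟩ :=
        s.attach.exists_mem_eq_sup (Finset.attach_nonempty_iff.2 hs) fun j => τ.decRank j.1 + 1
      obtain ⟨-, hji, hτ⟩ := Finset.mem_filter.mp hj
      obtain ⟨l, hlen, hl, hle⟩ := ih j hji
      refine ⟨l ++ [i], ?_, ?_, ?_⟩
      · rw [decRank.eq_1 τ i]
        simp [s, hsup, hlen]
      · refine List.pairwise_append.2 ⟨hl, List.pairwise_singleton _ _, ?_⟩
        intro a ha b hb
        rw [List.mem_singleton.1 hb]
        exact ⟨(hle a ha).1.trans_lt hji, hτ.trans_le (hle a ha).2⟩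
      · intro a ha
        rcases List.mem_append.1 ha with ha | ha
        · exact ⟨((hle a ha).1.trans_lt hji).le, (hτ.trans_le (hle a ha).2).le⟩
        · rw [List.mem_singleton.1 ha]; exact ⟨le_rfl, le_rfl⟩

theorem contains_revPerm_of_strictAnti {k : ℕ} {f : Fin k → Fin n} (hf : StrictMono f)
    (hτf : StrictAnti (τ ∘ f)) : Contains τ (Fin.revPerm : Equiv.Perm (Fin k)) :=
  ⟨f, hf, fun j l => by
    rw [Fin.revPerm_apply, Fin.revPerm_apply, Fin.rev_lt_rev]
    exact hτf.lt_iff_gt.symm⟩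

theorem decRank_add_one_lt {k : ℕ} (hτ : ¬ Contains τ (Fin.revPerm : Equiv.Perm (Fin k)))
    (i : Fin n) : τ.decRank i + 1 < k := by
  by_contra! hk
  obtain ⟨l, hlen, hl, -⟩ := τ.exists_decreasing_list_length_eq i
  have hget := List.pairwise_iff_get.1 hl
  exact hτ (τ.contains_revPerm_of_strictAnti (f := fun x => l.get (Fin.cast hlen.symm
    (Fin.castLE hk x))) (fun a b hab => (hget _ _ hab).1) (fun a b hab => (hget _ _ hab).2))

theorem eq_of_decRank_eq {σ : Equiv.Perm (Fin n)} (h₁ : τ.decRank = σ.decRank)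
    (h₂ : τ.decRank ∘ τ.symm = σ.decRank ∘ σ.symm) : τ = σ := by
  ext i : 1
  -- On the level set of `i`, both `τ` and `σ` are increasing with the same image.
  have himage : τ '' {x | τ.decRank x = τ.decRank i} = σ '' {x | τ.decRank x = τ.decRank i} := by
    ext v
    simp only [Equiv.image_eq_preimage_symm, Set.mem_preimage, Set.mem_ofPred_eq]
    rw [← Function.comp_apply (f := τ.decRank), h₂, h₁, Function.comp_apply]
  refine (τ.strictMonoOn_setOf_decRank_eq _).eqOn_of_image_eq ?_ himage rfl
  rw [h₁]
  exact σ.strictMonoOn_setOf_decRank_eq _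

end Equiv.Perm

open Equiv.Perm in
theorem stmt13_general {n k : ℕ} :
    {τ : Equiv.Perm (Fin n) | ¬ Contains τ (Fin.revPerm : Equiv.Perm (Fin k))}.ncard ≤
      (k - 1) ^ (2 * n) := by
  set S := {τ : Equiv.Perm (Fin n) | ¬ Contains τ (Fin.revPerm : Equiv.Perm (Fin k))}
  let level (τ : S) (i : Fin n) : Fin (k - 1) :=
    ⟨decRank τ i, by have := decRank_add_one_lt (τ : Equiv.Perm (Fin n)) τ.2 i; omega⟩
  have hinj : Function.Injective fun τ : S => (level τ, level τ ∘ τ.1.symm) := by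
    intro τ σ h
    simp only [Prod.mk.injEq, funext_iff, Function.comp_apply, Fin.ext_iff, level] at h
    exact Subtype.ext (eq_of_decRank_eq _ (funext h.1) (funext h.2))
  calc S.ncard = Nat.card S := (Nat.card_coe_set_eq S).symm
    _ ≤ Nat.card ((Fin n → Fin (k - 1)) × (Fin n → Fin (k - 1))) :=
      Nat.card_le_card_of_injective _ hinj
    _ = (k - 1) ^ (2 * n) := by simp [two_mul, pow_add]

/-- The number of permutations of length `n` avoiding the decreasing pattern of
length `k` is at most `(k-1)^(2n)`. -/
theorem stmt13 {n k : ℕ} (hk : 2 ≤ k) (hn : 1 ≤ n) :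
    {τ : Equiv.Perm (Fin n) | ¬ Contains τ (Fin.revPerm : Equiv.Perm (Fin k))}.ncard ≤
      (k - 1) ^ (2 * n) :=
  stmt13_general
end
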